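/- arXiv:2309.11983 — 2 statements merged into one kernel-verified Lean document; each statement's English description precedes it below -/
import Mathlib

section
/- Let T ≥ 1, let A be a finite alphabet (including a blank symbol), let Y be a finite type of target sequences, and let F : A^T → Y be the collapsing map from paths to targets. For each t ∈ {1, …, T} let Z_t be a finite type, let q_t, p_t be probability mass functions on Z_t with q_t(z) > 0 implying p_t(z) > 0, and let e_t : Z_t → (probability mass functions on A) be per-step emission distributions. For a latent sequence z = (z_1, …, z_T), define the conditional likelihood of a target y by ℓ(y | z) = Σ_{A' ∈ A^T, F(A') = y} Π_{t=1}^{T} e_t(z_t)(a'_t), and define the model likelihood p(y) = Σ_z (Π_t p_t(z_t))·ℓ(y | z). Fix a target y with p(y) > 0 and suppose ℓ(y | z) > 0 whenever Π_t q_t(z_t) > 0. Then log p(y) ≥ Σ_z (Π_t q_t(z_t))·log ℓ(y | z) − Σ_{t=1}^{T} KL(q_t‖p_t). -/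
open Finset

/-- Kullback–Leibler divergence between two probability mass functions on a finite
type, `KL(q‖p) = ∑_{z : q z > 0} q z * log (q z / p z)`. -/
noncomputable def klDiv {Z : Type*} [Fintype Z] (q p : Z → ℝ) : ℝ :=
  ∑ z, if 0 < q z then q z * Real.log (q z / p z) else 0

/-- Gibbs-type inequality / Jensen for log. -/
lemma gibbs_aux {ι : Type*} [Fintype ι] (w a : ι → ℝ)
    (hw : ∀ i, 0 ≤ w i) (hw1 : ∑ i, w i = 1)
    (ha : ∀ i, 0 ≤ a i) (hwa : ∀ i, 0 < w i → 0 < a i)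
    (hS : 0 < ∑ i, a i) :
    ∑ i, (if 0 < w i then w i * Real.log (a i / w i) else 0) ≤ Real.log (∑ i, a i) := by
  set S := ∑ i, a i with hSdef
  have key : ∀ i, (if 0 < w i then w i * Real.log (a i / w i) else 0)
      ≤ a i / S - w i + w i * Real.log S := by
    intro i
    by_cases hwi : 0 < w i
    · simp only [hwi, if_pos]
      have hai := hwa i hwi
      have hpos : 0 < a i / (w i * S) := by positivity
      have hlog : Real.log (a i / (w i * S)) ≤ a i / (w i * S) - 1 :=
        Real.log_le_sub_one_of_pos hpos
      have heq : Real.log (a i / w i) = Real.log (a i / (w i * S)) + Real.log S := by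
        rw [Real.log_div (ne_of_gt hai) (by positivity),
            Real.log_div (ne_of_gt hai) (by positivity),
            Real.log_mul (ne_of_gt hwi) (ne_of_gt hS)]
        ring
      rw [heq, mul_add]
      have : w i * Real.log (a i / (w i * S)) ≤ a i / S - w i := by
        calc w i * Real.log (a i / (w i * S)) ≤ w i * (a i / (w i * S) - 1) :=
              mul_le_mul_of_nonneg_left hlog (hw i)
          _ = a i / S - w i := by field_simp
      linarith
    · rw [if_neg hwi]
      have hwi0 : w i = 0 := le_antisymm (not_lt.1 hwi) (hw i)
      rw [hwi0]
      have : 0 ≤ a i / S := div_nonneg (ha i) hS.le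
      linarith
  calc ∑ i, (if 0 < w i then w i * Real.log (a i / w i) else 0)
      ≤ ∑ i, (a i / S - w i + w i * Real.log S) := Finset.sum_le_sum fun i _ => key i
    _ = (∑ i, a i) / S - (∑ i, w i) + (∑ i, w i) * Real.log S := by
        rw [Finset.sum_add_distrib, Finset.sum_sub_distrib, ← Finset.sum_div, ← Finset.sum_mul]
    _ = Real.log S := by rw [hw1, div_self (ne_of_gt hS)]; ring

/-- Marginalization for product distributions on a dependent product type. -/
lemma marginal_aux {T : ℕ} (Z : Fin T → Type*) [∀ t, Fintype (Z t)]
    (q : (t : Fin T) → Z t → ℝ) (hq_sum : ∀ t, ∑ z, q t z = 1)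
    (t₀ : Fin T) (g : Z t₀ → ℝ) :
    ∑ z : (t : Fin T) → Z t, (∏ t, q t (z t)) * g (z t₀) = ∑ w, q t₀ w * g w := by
  classical
  have key : ∀ z : (t : Fin T) → Z t,
      (∏ t, q t (z t)) * g (z t₀)
        = ∏ t, (q t (z t) * (if h : t = t₀ then g (h ▸ z t) else 1)) := by
    intro z
    rw [Finset.prod_mul_distrib]
    congr 1
    rw [Finset.prod_eq_single t₀ (fun b _ hb => dif_neg hb) (by simp)]
    simp
  calc ∑ z : (t : Fin T) → Z t, (∏ t, q t (z t)) * g (z t₀)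
      = ∑ z : (t : Fin T) → Z t,
          ∏ t, (q t (z t) * (if h : t = t₀ then g (h ▸ z t) else 1)) :=
        Finset.sum_congr rfl fun z _ => key z
    _ = ∏ t, ∑ w, (q t w * (if h : t = t₀ then g (h ▸ w) else 1)) :=
        (Fintype.prod_sum fun t (w : Z t) => q t w * (if h : t = t₀ then g (h ▸ w) else 1)).symm
    _ = ∑ w, q t₀ w * g w := by
        rw [Finset.prod_eq_single t₀ (fun b _ hb => by
          simp only [dif_neg hb, mul_one]; exact hq_sum b) (by simp)]
        simp

/-- Proposition 1 of the paper (discrete setting): under the conditional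
independence assumption, the CTC-style prediction term minus the sum of
per-time-step KL divergences is a lower bound on the log-likelihood of the
target sequence `y`. -/
theorem variational_ctc_conditional_independence {T : ℕ} (hT : 1 ≤ T)
    {A Y : Type*} [Fintype A] [Fintype Y] [DecidableEq Y]
    (F : (Fin T → A) → Y)
    (Z : Fin T → Type*) [∀ t, Fintype (Z t)]
    (q p : (t : Fin T) → Z t → ℝ)
    (e : (t : Fin T) → Z t → A → ℝ)
    (hq_nonneg : ∀ t z, 0 ≤ q t z) (hq_sum : ∀ t, ∑ z, q t z = 1)
    (hp_nonneg : ∀ t z, 0 ≤ p t z) (hp_sum : ∀ t, ∑ z, p t z = 1)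
    (hqp : ∀ t z, 0 < q t z → 0 < p t z)
    (he_nonneg : ∀ t z a, 0 ≤ e t z a) (he_sum : ∀ t z, ∑ a, e t z a = 1)
    (ℓ : Y → ((t : Fin T) → Z t) → ℝ)
    (hℓ : ∀ y z, ℓ y z =
      ∑ A' ∈ univ.filter (fun A' : Fin T → A => F A' = y), ∏ t, e t (z t) (A' t))
    (y : Y) (py : ℝ)
    (hpy : py = ∑ z : (t : Fin T) → Z t, (∏ t, p t (z t)) * ℓ y z)
    (hpy_pos : 0 < py)
    (hqℓ : ∀ z : (t : Fin T) → Z t, 0 < ∏ t, q t (z t) → 0 < ℓ y z) :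
    Real.log py ≥
      (∑ z : (t : Fin T) → Z t, (∏ t, q t (z t)) * Real.log (ℓ y z))
        - ∑ t, klDiv (q t) (p t) := by
  classical
  -- notation
  have hQ_nonneg : ∀ z : (t : Fin T) → Z t, 0 ≤ ∏ t, q t (z t) :=
    fun z => Finset.prod_nonneg fun t _ => hq_nonneg t (z t)
  have hQ_sum : ∑ z : (t : Fin T) → Z t, ∏ t, q t (z t) = 1 := by
    rw [← Fintype.prod_sum (fun t (w : Z t) => q t w)]
    simp [hq_sum]
  have hℓ_nonneg : ∀ z, 0 ≤ ℓ y z := by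
    intro z
    rw [hℓ]
    exact Finset.sum_nonneg fun A' _ =>
      Finset.prod_nonneg fun t _ => he_nonneg t (z t) (A' t)
  have hq_pos : ∀ z : (t : Fin T) → Z t, 0 < ∏ t, q t (z t) → ∀ t, 0 < q t (z t) := by
    intro z hz t
    rcases (hq_nonneg t (z t)).lt_or_eq with h | h
    · exact h
    · exfalso
      rw [Finset.prod_eq_zero (Finset.mem_univ t) h.symm] at hz
      exact lt_irrefl 0 hz
  -- the Gibbs inequality
  have hgibbs := gibbs_aux (fun z : (t : Fin T) → Z t => ∏ t, q t (z t))
    (fun z : (t : Fin T) → Z t => (∏ t, p t (z t)) * ℓ y z)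
    hQ_nonneg hQ_sum
    (fun z => mul_nonneg (Finset.prod_nonneg fun t _ => hp_nonneg t (z t)) (hℓ_nonneg z))
    (fun z hz => mul_pos (Finset.prod_pos fun t _ => hqp t (z t) (hq_pos z hz t)) (hqℓ z hz))
    (by rw [← hpy]; exact hpy_pos)
  rw [← hpy] at hgibbs
  -- rewrite each Gibbs summand
  have per : ∀ z : (t : Fin T) → Z t,
      (if 0 < ∏ t, q t (z t) then
        (∏ t, q t (z t)) * Real.log ((∏ t, p t (z t)) * ℓ y z / ∏ t, q t (z t)) else 0)
      = (∏ t, q t (z t)) * Real.log (ℓ y z)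
        - ∑ t, (∏ s, q s (z s)) * Real.log (q t (z t) / p t (z t)) := by
    intro z
    by_cases hz : 0 < ∏ t, q t (z t)
    · rw [if_pos hz]
      have hqz : ∀ t, 0 < q t (z t) := hq_pos z hz
      have hpz : ∀ t, 0 < p t (z t) := fun t => hqp t (z t) (hqz t)
      have hP : 0 < ∏ t, p t (z t) := Finset.prod_pos fun t _ => hpz t
      have hℓz : 0 < ℓ y z := hqℓ z hz
      rw [Real.log_div (by positivity) (ne_of_gt hz),
          Real.log_mul (ne_of_gt hP) (ne_of_gt hℓz),
          Real.log_prod (fun t _ => ne_of_gt (hpz t)),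
          Real.log_prod (fun t _ => ne_of_gt (hqz t))]
      have : ∀ t, (∏ s, q s (z s)) * Real.log (q t (z t) / p t (z t))
          = (∏ s, q s (z s)) * (Real.log (q t (z t)) - Real.log (p t (z t))) := by
        intro t
        rw [Real.log_div (ne_of_gt (hqz t)) (ne_of_gt (hpz t))]
      rw [Finset.sum_congr rfl fun t _ => this t, ← Finset.mul_sum, Finset.sum_sub_distrib]
      ring
    · rw [if_neg hz]
      have hz0 : ∏ t, q t (z t) = 0 := le_antisymm (not_lt.1 hz) (hQ_nonneg z)
      simp [hz0]
  rw [Finset.sum_congr rfl fun z _ => per z, Finset.sum_sub_distrib] at hgibbs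
  -- compute the KL part by marginalization
  have hswap : ∑ z : (t : Fin T) → Z t,
      ∑ t, (∏ s, q s (z s)) * Real.log (q t (z t) / p t (z t))
      = ∑ t, klDiv (q t) (p t) := by
    rw [Finset.sum_comm]
    refine Finset.sum_congr rfl fun t _ => ?_
    rw [marginal_aux Z q hq_sum t (fun w => Real.log (q t w / p t w))]
    unfold klDiv
    refine Finset.sum_congr rfl fun w _ => ?_
    by_cases hw : 0 < q t w
    · rw [if_pos hw]
    · rw [if_neg hw, le_antisymm (not_lt.1 hw) (hq_nonneg t w), zero_mul]
  rw [hswap] at hgibbs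
  exact hgibbs
end

section
/- Let T ≥ 1, let A be a finite alphabet (including a blank symbol), let Y be a finite type of target sequences, and let F : A^T → Y be the collapsing map from paths to targets. For each t ∈ {1, …, T} let Z_t be a finite type and let q_t be a probability mass function on Z_t; let p₁ be a probability mass function on Z₁ and for t ∈ {2, …, T} let κ_t : Z_{t−1} → (probability mass functions on Z_t) be Markov transitions; let e_t : Z_t → (probability mass functions on A) be per-step emission distributions. Assume q₁(z) > 0 implies p₁(z) > 0, and for t ≥ 2 and z_{t−1} with q_{t−1}(z_{t−1}) > 0, q_t(z_t) > 0 implies κ_t(z_{t−1})(z_t) > 0. For z = (z_1, …, z_T), define ℓ(y | z) = Σ_{A' ∈ A^T, F(A') = y} Π_{t=1}^{T} e_t(z_t)(a'_t), and define p(y) = Σ_z (p₁(z₁)·Π_{t=2}^{T} κ_t(z_{t−1})(z_t))·ℓ(y | z). Fix a target y with p(y) > 0 and suppose ℓ(y | z) > 0 whenever Π_t q_t(z_t) > 0. Then log p(y) ≥ Σ_z (Π_t q_t(z_t))·log ℓ(y | z) − KL(q₁‖p₁) − Σ_{t=2}^{T} Σ_{z_{t−1}} q_{t−1}(z_{t−1})·KL(q_t‖κ_t(z_{t−1})).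 -/
open Finset

section marg
variable {ι : Type*} [Fintype ι] [DecidableEq ι] {Z : ι → Type*} [∀ i, Fintype (Z i)]

lemma gibbs_aux_s8 {W : Type*} [Fintype W] (Q R : W → ℝ)
    (hQ0 : ∀ w, 0 ≤ Q w) (hQ1 : ∑ w, Q w = 1) (hR0 : ∀ w, 0 ≤ R w)
    (hQR : ∀ w, 0 < Q w → 0 < R w) (hS : 0 < ∑ w, R w) :
    ∑ w, (if 0 < Q w then Q w * Real.log (R w / Q w) else 0) ≤ Real.log (∑ w, R w) := by
  set S := ∑ w, R w with hSdef
  have key : ∀ w, (if 0 < Q w then Q w * Real.log (R w / Q w) else 0) ≤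
      (R w / S - Q w) + Q w * Real.log S := by
    intro w
    by_cases h : 0 < Q w
    · have hRw := hQR w h
      have h1 : R w / Q w = (R w / (S * Q w)) * S := by
        field_simp
      have h2 : Real.log (R w / Q w) = Real.log (R w / (S * Q w)) + Real.log S := by
        rw [h1, Real.log_mul (by positivity) (ne_of_gt hS)]
      have h3 : Real.log (R w / (S * Q w)) ≤ R w / (S * Q w) - 1 :=
        Real.log_le_sub_one_of_pos (by positivity)
      have h4 : Q w * (R w / (S * Q w) - 1) = R w / S - Q w := by
        field_simp
      rw [if_pos h, h2, mul_add]
      nlinarith [mul_le_mul_of_nonneg_left h3 (le_of_lt h)]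
    · have hq0 : Q w = 0 := le_antisymm (not_lt.mp h) (hQ0 w)
      rw [if_neg h, hq0]
      simp only [sub_zero, zero_mul, add_zero]
      exact div_nonneg (hR0 w) hS.le
  calc ∑ w, (if 0 < Q w then Q w * Real.log (R w / Q w) else 0)
      ≤ ∑ w, ((R w / S - Q w) + Q w * Real.log S) := Finset.sum_le_sum fun w _ => key w
    _ = (∑ w, R w) / S - (∑ w, Q w) + (∑ w, Q w) * Real.log S := by
        rw [Finset.sum_add_distrib, Finset.sum_sub_distrib, ← Finset.sum_div, ← Finset.sum_mul]
    _ = Real.log S := by rw [hQ1, ← hSdef]; field_simp; ring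

lemma marg_one (q : ∀ i, Z i → ℝ) (hq : ∀ i, ∑ w, q i w = 1) (i : ι) (h : Z i → ℝ) :
    ∑ z : ∀ t, Z t, (∏ t, q t (z t)) * h (z i) = ∑ w, q i w * h w := by
  set G : ∀ t, Z t → ℝ := Function.update q i (fun w => q i w * h w) with hG
  have h1 : ∀ z : ∀ t, Z t, (∏ t, q t (z t)) * h (z i) = ∏ t, G t (z t) := by
    intro z
    rw [← Finset.mul_prod_erase univ (fun t => G t (z t)) (mem_univ i),
        ← Finset.mul_prod_erase univ (fun t => q t (z t)) (mem_univ i)]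
    have hrest : ∀ t ∈ univ.erase i, G t (z t) = q t (z t) := by
      intro t ht
      rw [hG, Function.update_of_ne (Finset.ne_of_mem_erase ht)]
    rw [Finset.prod_congr rfl hrest, hG, Function.update_self]
    ring
  rw [Finset.sum_congr rfl fun z _ => h1 z, ← Fintype.prod_sum,
      ← Finset.mul_prod_erase univ (fun t => ∑ w, G t w) (mem_univ i)]
  have hrest : ∀ t ∈ univ.erase i, (∑ w, G t w) = 1 := by
    intro t ht
    rw [hG, Function.update_of_ne (Finset.ne_of_mem_erase ht)]
    exact hq t
  rw [Finset.prod_congr rfl hrest, Finset.prod_const_one, mul_one, hG, Function.update_self]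

lemma marg_two_prod (q : ∀ i, Z i → ℝ) (hq : ∀ i, ∑ w, q i w = 1) (i j : ι) (hij : i ≠ j)
    (f : Z i → ℝ) (g : Z j → ℝ) :
    ∑ z : ∀ t, Z t, (∏ t, q t (z t)) * (f (z i) * g (z j)) =
      (∑ w, q i w * f w) * (∑ w, q j w * g w) := by
  set G : ∀ t, Z t → ℝ :=
    Function.update (Function.update q i (fun w => q i w * f w)) j (fun w => q j w * g w)
    with hG
  have hGi : G i = fun w => q i w * f w := by
    rw [hG, Function.update_of_ne hij, Function.update_self]
  have hGj : G j = fun w => q j w * g w := by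
    rw [hG, Function.update_self]
  have hGrest : ∀ t, t ≠ i → t ≠ j → G t = q t := by
    intro t hti htj
    rw [hG, Function.update_of_ne htj, Function.update_of_ne hti]
  have hjmem : j ∈ univ.erase i := by simp [hij.symm, Ne, fun h : j = i => hij h.symm]
  have key : ∀ (H : ∀ t, Z t → ℝ) (w : ∀ t, Z t),
      ∏ t, H t (w t) = H i (w i) * (H j (w j) * ∏ t ∈ (univ.erase i).erase j, H t (w t)) := by
    intro H w
    rw [← Finset.mul_prod_erase univ (fun t => H t (w t)) (mem_univ i),
        ← Finset.mul_prod_erase (univ.erase i) (fun t => H t (w t)) hjmem]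
  have h1 : ∀ z : ∀ t, Z t, (∏ t, q t (z t)) * (f (z i) * g (z j)) = ∏ t, G t (z t) := by
    intro z
    rw [key G z, key q z, hGi, hGj]
    have hrest : ∀ t ∈ (univ.erase i).erase j, G t (z t) = q t (z t) := by
      intro t ht
      rw [hGrest t (Finset.ne_of_mem_erase (Finset.mem_of_mem_erase ht))
        (Finset.ne_of_mem_erase ht)]
    rw [Finset.prod_congr rfl hrest]
    ring
  rw [Finset.sum_congr rfl fun z _ => h1 z, ← Fintype.prod_sum,
      ← Finset.mul_prod_erase univ (fun t => ∑ w, G t w) (mem_univ i),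
      ← Finset.mul_prod_erase (univ.erase i) (fun t => ∑ w, G t w) hjmem, hGi, hGj]
  have hrest : ∀ t ∈ (univ.erase i).erase j, (∑ w, G t w) = 1 := by
    intro t ht
    rw [hGrest t (Finset.ne_of_mem_erase (Finset.mem_of_mem_erase ht))
      (Finset.ne_of_mem_erase ht)]
    exact hq t
  rw [Finset.prod_congr rfl hrest, Finset.prod_const_one, mul_one]

lemma marg_two [∀ i, DecidableEq (Z i)] (q : ∀ i, Z i → ℝ) (hq : ∀ i, ∑ w, q i w = 1)
    (i j : ι) (hij : i ≠ j) (h : Z i → Z j → ℝ) :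
    ∑ z : ∀ t, Z t, (∏ t, q t (z t)) * h (z i) (z j) =
      ∑ w, ∑ w', (q i w * q j w') * h w w' := by
  have key : ∀ (w : Z i) (w' : Z j),
      ∑ z : ∀ t, Z t, (∏ t, q t (z t)) *
        ((if z i = w then (1:ℝ) else 0) * (if z j = w' then 1 else 0)) = q i w * q j w' := by
    intro w w'
    rw [marg_two_prod q hq i j hij (fun a => if a = w then 1 else 0)
      (fun b => if b = w' then 1 else 0)]
    simp
  calc ∑ z : ∀ t, Z t, (∏ t, q t (z t)) * h (z i) (z j)
      = ∑ z : ∀ t, Z t, ∑ w, ∑ w', ((∏ t, q t (z t)) *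
          ((if z i = w then (1:ℝ) else 0) * (if z j = w' then 1 else 0))) * h w w' := by
        refine Finset.sum_congr rfl fun z _ => ?_
        simp only [mul_assoc, ← Finset.mul_sum]
        congr 1
        simp [ite_mul, one_mul, zero_mul, Finset.sum_ite_eq]
    _ = ∑ w, ∑ w', (q i w * q j w') * h w w' := by
        rw [Finset.sum_comm]
        refine Finset.sum_congr rfl fun w _ => ?_
        rw [Finset.sum_comm]
        refine Finset.sum_congr rfl fun w' _ => ?_
        rw [← Finset.sum_mul, key w w']

end marg

/-- Proposition 2 of the paper (discrete setting): when the prior over the latent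
sequence is a first-order Markov chain and the approximate posterior factorizes
over the `T = n + 1` time steps, the CTC-style prediction term minus the sum over
time steps of the expected per-step KL divergence to the Markov transition is a
lower bound on the log-likelihood of the target sequence `y`. -/
theorem variational_ctc_markov {n : ℕ}
    {A Y : Type*} [Fintype A] [Fintype Y] [DecidableEq Y]
    (F : (Fin (n + 1) → A) → Y)
    (Z : Fin (n + 1) → Type*) [∀ t, Fintype (Z t)]
    (q : (t : Fin (n + 1)) → Z t → ℝ)
    (p₁ : Z 0 → ℝ)
    (κ : (t : Fin n) → Z t.castSucc → Z t.succ → ℝ)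
    (e : (t : Fin (n + 1)) → Z t → A → ℝ)
    (hq_nonneg : ∀ t z, 0 ≤ q t z) (hq_sum : ∀ t, ∑ z, q t z = 1)
    (hp₁_nonneg : ∀ z, 0 ≤ p₁ z) (hp₁_sum : ∑ z, p₁ z = 1)
    (hκ_nonneg : ∀ t z z', 0 ≤ κ t z z') (hκ_sum : ∀ t z, ∑ z', κ t z z' = 1)
    (hq₁p₁ : ∀ z, 0 < q 0 z → 0 < p₁ z)
    (hqκ : ∀ (t : Fin n) (z : Z t.castSucc), 0 < q t.castSucc z →
      ∀ z' : Z t.succ, 0 < q t.succ z' → 0 < κ t z z')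
    (he_nonneg : ∀ t z a, 0 ≤ e t z a) (he_sum : ∀ t z, ∑ a, e t z a = 1)
    (ℓ : Y → ((t : Fin (n + 1)) → Z t) → ℝ)
    (hℓ : ∀ y z, ℓ y z =
      ∑ A' ∈ univ.filter (fun A' : Fin (n + 1) → A => F A' = y),
        ∏ t, e t (z t) (A' t))
    (y : Y) (py : ℝ)
    (hpy : py = ∑ z : (t : Fin (n + 1)) → Z t,
      (p₁ (z 0) * ∏ t : Fin n, κ t (z t.castSucc) (z t.succ)) * ℓ y z)
    (hpy_pos : 0 < py)
    (hqℓ : ∀ z : (t : Fin (n + 1)) → Z t, 0 < ∏ t, q t (z t) → 0 < ℓ y z) :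
    Real.log py ≥
      (∑ z : (t : Fin (n + 1)) → Z t, (∏ t, q t (z t)) * Real.log (ℓ y z))
        - klDiv (q 0) p₁
        - ∑ t : Fin n, ∑ z : Z t.castSucc,
            q t.castSucc z * klDiv (q t.succ) (κ t z) := by
  classical
  -- abbreviations
  obtain ⟨Q, hQdef⟩ : ∃ f : ((t : Fin (n+1)) → Z t) → ℝ, f = fun z => ∏ t, q t (z t) := ⟨_, rfl⟩
  obtain ⟨R, hRdef⟩ : ∃ f : ((t : Fin (n+1)) → Z t) → ℝ,
      f = fun z => (p₁ (z 0) * ∏ t : Fin n, κ t (z t.castSucc) (z t.succ)) * ℓ y z := ⟨_, rfl⟩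
  obtain ⟨hB, hBdef⟩ : ∃ f : Z 0 → ℝ,
      f = fun w => if 0 < q 0 w then Real.log (p₁ w / q 0 w) else 0 := ⟨_, rfl⟩
  obtain ⟨hC, hCdef⟩ : ∃ f : (t : Fin n) → Z t.castSucc → Z t.succ → ℝ,
      f = fun t w w' => if 0 < q t.castSucc w ∧ 0 < q t.succ w' then
        Real.log (κ t w w' / q t.succ w') else 0 := ⟨_, rfl⟩
  have hQ0 : ∀ z, 0 ≤ Q z := fun z => by
    simp only [hQdef]; exact Finset.prod_nonneg fun t _ => hq_nonneg t (z t)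
  have hQ1 : ∑ z, Q z = 1 := by
    simp only [hQdef]
    rw [← Fintype.prod_sum (fun t (w : Z t) => q t w)]
    exact Finset.prod_eq_one fun t _ => hq_sum t
  have hℓ0 : ∀ z, 0 ≤ ℓ y z := fun z => by
    rw [hℓ]
    exact Finset.sum_nonneg fun A' _ => Finset.prod_nonneg fun t _ => he_nonneg _ _ _
  have hR0 : ∀ z, 0 ≤ R z := fun z => by
    simp only [hRdef]
    exact mul_nonneg (mul_nonneg (hp₁_nonneg _)
      (Finset.prod_nonneg fun t _ => hκ_nonneg _ _ _)) (hℓ0 z)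
  have hqpos : ∀ z, 0 < Q z → ∀ t, 0 < q t (z t) := by
    intro z hz t
    rcases (hq_nonneg t (z t)).lt_or_eq with h | h
    · exact h
    · exfalso
      simp only [hQdef] at hz
      rw [Finset.prod_eq_zero (mem_univ t) h.symm] at hz
      exact lt_irrefl _ hz
  have hQR : ∀ z, 0 < Q z → 0 < R z := by
    intro z hz
    have h1 : 0 < p₁ (z 0) := hq₁p₁ _ (hqpos z hz 0)
    have h2 : ∀ t : Fin n, 0 < κ t (z t.castSucc) (z t.succ) := fun t =>
      hqκ t _ (hqpos z hz t.castSucc) _ (hqpos z hz t.succ)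
    simp only [hRdef]
    exact mul_pos (mul_pos h1 (Finset.prod_pos fun t _ => h2 t))
      (hqℓ z (by simp only [hQdef] at hz; exact hz))
  have hpyR : py = ∑ z, R z := by rw [hpy]; simp only [hRdef]
  have hSpos : 0 < ∑ z, R z := hpyR ▸ hpy_pos
  have gibbs := gibbs_aux_s8 Q R hQ0 hQ1 hR0 hQR hSpos
  -- decomposition of each guarded term
  have decomp : ∀ z, (if 0 < Q z then Q z * Real.log (R z / Q z) else 0) =
      Q z * Real.log (ℓ y z) + Q z * hB (z 0)
        + ∑ t : Fin n, Q z * hC t (z t.castSucc) (z t.succ) := by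
    intro z
    by_cases hz : 0 < Q z
    · have hqt := hqpos z hz
      have hp : 0 < p₁ (z 0) := hq₁p₁ _ (hqt 0)
      have hκt : ∀ t : Fin n, 0 < κ t (z t.castSucc) (z t.succ) := fun t =>
        hqκ t _ (hqt t.castSucc) _ (hqt t.succ)
      have hl : 0 < ℓ y z := hqℓ z (by simp only [hQdef] at hz; exact hz)
      have hprodq : 0 < ∏ t : Fin n, q t.succ (z t.succ) :=
        Finset.prod_pos fun t _ => hqt t.succ
      have hQsplit : Q z = q 0 (z 0) * ∏ t : Fin n, q t.succ (z t.succ) := by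
        simp only [hQdef]
        exact Fin.prod_univ_succ fun i => q i (z i)
      have hRQ : R z / Q z = ℓ y z * ((p₁ (z 0) / q 0 (z 0)) *
          ∏ t : Fin n, (κ t (z t.castSucc) (z t.succ) / q t.succ (z t.succ))) := by
        simp only [hRdef]; rw [ hQsplit, Finset.prod_div_distrib]
        field_simp
      have e1 : hB (z 0) = Real.log (p₁ (z 0) / q 0 (z 0)) := by
        simp only [hBdef]; exact if_pos (hqt 0)
      have e2 : ∀ t : Fin n, hC t (z t.castSucc) (z t.succ) =
          Real.log (κ t (z t.castSucc) (z t.succ) / q t.succ (z t.succ)) := by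
        intro t
        simp only [hCdef]; exact if_pos ⟨hqt t.castSucc, hqt t.succ⟩
      have hd1 : 0 < p₁ (z 0) / q 0 (z 0) := div_pos hp (hqt 0)
      have hd2 : 0 < ∏ t : Fin n, (κ t (z t.castSucc) (z t.succ) / q t.succ (z t.succ)) :=
        Finset.prod_pos fun t _ => div_pos (hκt t) (hqt t.succ)
      rw [if_pos hz, hRQ,
        Real.log_mul hl.ne' (mul_pos hd1 hd2).ne',
        Real.log_mul hd1.ne' hd2.ne',
        Real.log_prod (fun t _ => (div_pos (hκt t) (hqt t.succ)).ne')]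
      simp only [e1, e2]
      rw [mul_add, mul_add, Finset.mul_sum, ← add_assoc]
    · have h0 : Q z = 0 := le_antisymm (not_lt.mp hz) (hQ0 z)
      rw [if_neg hz, h0]
      simp
  rw [Finset.sum_congr rfl fun z _ => decomp z, Finset.sum_add_distrib,
    Finset.sum_add_distrib, ← hpyR] at gibbs
  -- identify the three pieces
  have hAsum : ∑ z, Q z * Real.log (ℓ y z) =
      ∑ z : (t : Fin (n + 1)) → Z t, (∏ t, q t (z t)) * Real.log (ℓ y z) := by
    simp only [hQdef]
  have hBsum : ∑ z, Q z * hB (z 0) = - klDiv (q 0) p₁ := by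
    simp only [hQdef]; rw [ marg_one q hq_sum 0 hB, klDiv, ← Finset.sum_neg_distrib]
    refine Finset.sum_congr rfl fun w _ => ?_
    by_cases hw : 0 < q 0 w
    · simp only [hBdef]; rw [ if_pos hw, if_pos hw, ← inv_div, Real.log_inv]
      ring
    · simp only [hBdef]; rw [ if_neg hw, if_neg hw]
      simp
  have hCsum : ∀ t : Fin n, ∑ z, Q z * hC t (z t.castSucc) (z t.succ) =
      - ∑ w : Z t.castSucc, q t.castSucc w * klDiv (q t.succ) (κ t w) := by
    intro t
    simp only [hQdef]; rw [ marg_two q hq_sum t.castSucc t.succ (Fin.castSucc_lt_succ : t.castSucc < t.succ).ne (hC t),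
      ← Finset.sum_neg_distrib]
    refine Finset.sum_congr rfl fun w _ => ?_
    by_cases hw : 0 < q t.castSucc w
    · rw [klDiv, Finset.mul_sum, ← Finset.sum_neg_distrib]
      refine Finset.sum_congr rfl fun w' _ => ?_
      by_cases hw' : 0 < q t.succ w'
      · simp only [hCdef]
        rw [if_pos (And.intro hw hw'), if_pos hw', ← inv_div, Real.log_inv]
        ring
      · have h0 : q t.succ w' = 0 := le_antisymm (not_lt.mp hw') (hq_nonneg _ w')
        simp [hCdef, h0, hw']
    · have h0 : q t.castSucc w = 0 := le_antisymm (not_lt.mp hw) (hq_nonneg _ w)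
      simp [h0]
  have hCtotal : ∑ z, ∑ t : Fin n, Q z * hC t (z t.castSucc) (z t.succ) =
      - ∑ t : Fin n, ∑ w : Z t.castSucc, q t.castSucc w * klDiv (q t.succ) (κ t w) := by
    rw [Finset.sum_comm, Finset.sum_congr rfl fun t _ => hCsum t, Finset.sum_neg_distrib]
  rw [hAsum, hBsum, hCtotal] at gibbs
  linarith
end
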